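/- Let s ∈ {1,2,3,4}, suppose the identity sequence id(k) = k belongs to D(A^s), and suppose (A^s id)(l) = β₀ + β₁ l for all l ∈ ℕ, where β₁ ≥ 1 and β₀ > 0. Let γ₁ = β₁^{1/s} (the positive real s-th root) and γ₀ = β₀ / (Σ_{k=0}^{s−1} γ₁^k). Then the adjacent regression is linear: (A id)(l) = γ₀ + γ₁ l for all l ∈ ℕ. -/

import Mathlib

open scoped BigOperators

noncomputable section

/-- Tail sum `q_l = Σ_{k ≥ l} p_k`. -/
def qtail (p : ℕ → ℝ) (l : ℕ) : ℝ := ∑' k, p (l + k)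

/-- The operator `A` on real sequences: `(A v)(l) = (1/q_l) Σ_{k=l}^∞ p_k v(k)`. -/
def opAR (p : ℕ → ℝ) (v : ℕ → ℝ) : ℕ → ℝ :=
  fun l => (1 / qtail p l) * ∑' k, p (l + k) * v (l + k)

/-- Membership in the domain `D(A) = {v : Σ_k p_k |v(k)| < ∞}` (real sequences). -/
def memDAR (p : ℕ → ℝ) (v : ℕ → ℝ) : Prop :=
  Summable fun k => p k * |v k|

/-- Membership in the domain `D(A^m) = {v : A^k v ∈ D(A) for k = 0,…,m-1}`. -/
def memDAiterR (p : ℕ → ℝ) (m : ℕ) (v : ℕ → ℝ) : Prop :=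
  ∀ k < m, memDAR p ((opAR p)^[k] v)

/-!
Put `h_j = A^{j+1} id - γ₁ A^j id - γ₀`. Then `A h_j = h_{j+1}`, and the linearity of `A^s id`
gives `h_s = γ₁^s h_0` together with the telescoping identity `Σ_{j<s} γ₁^{-j} h_j = 0`. Hence for
every `s`-th root of unity `ω` the sequence `z_ω = Σ_{j<s} (γ₁ ω)^{-j} h_j` satisfies
`A z_ω = γ₁ ω z_ω`, while `Σ_ω z_ω = s h_0`. A nonzero eigenfunction in `D(A)` with eigenvalue
`μ ≠ 0`, `Re μ ≤ 0` cannot exist: `q_l |z_l|` would be nondecreasing, so every tail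
`Σ_{k ≥ i} p_k |z_k|` would stay above a positive constant. For `s ≤ 4` every `ω ≠ 1` has
`Re ω ≤ 0`, and `z_1 = 0` is the telescoping identity, so `h_0 = 0`.
-/

open Finset Filter

section TailSums

variable {p : ℕ → ℝ}

lemma summable_comp_add_left (hsp : Summable p) (l : ℕ) : Summable fun k => p (l + k) := by
  simpa only [add_comm l] using (summable_nat_add_iff l).2 hsp

lemma qtail_pos (hp : ∀ k, 0 < p k) (hsp : Summable p) (l : ℕ) : 0 < qtail p l := by
  have h : p (l + 0) ≤ qtail p l := (summable_comp_add_left hsp l).le_tsum 0 fun j _ => (hp _).le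
  exact (hp l).trans_le (by rwa [add_zero] at h)

lemma qtail_eq_add_qtail_succ (hsp : Summable p) (l : ℕ) :
    qtail p l = p l + qtail p (l + 1) := by
  simpa [qtail, add_assoc, add_comm 1] using (summable_comp_add_left hsp l).tsum_eq_zero_add

lemma qtail_antitone (hp : ∀ k, 0 < p k) (hsp : Summable p) : Antitone (qtail p) :=
  antitone_nat_of_succ_le fun l => by linarith [qtail_eq_add_qtail_succ hsp l, hp l]

end TailSums

section Operator

variable {p v : ℕ → ℝ}

lemma memDAR_iff_summable_mul (hp : ∀ k, 0 < p k) :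
    memDAR p v ↔ Summable fun k => p k * v k := by
  rw [memDAR, ← summable_abs_iff (f := fun k => p k * v k)]
  simp only [abs_mul, abs_of_pos (hp _)]

lemma qtail_mul_opAR_eq_tsum (hp : ∀ k, 0 < p k) (hsp : Summable p) (l : ℕ) :
    qtail p l * opAR p v l = ∑' k, p (l + k) * v (l + k) := by
  rw [opAR, ← mul_assoc, mul_one_div_cancel (qtail_pos hp hsp l).ne', one_mul]

lemma qtail_mul_opAR_eq (hp : ∀ k, 0 < p k) (hsp : Summable p) (hv : memDAR p v) (l : ℕ) :
    qtail p l * opAR p v l = p l * v l + qtail p (l + 1) * opAR p v (l + 1) := by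
  rw [qtail_mul_opAR_eq_tsum hp hsp, qtail_mul_opAR_eq_tsum hp hsp,
    (summable_comp_add_left ((memDAR_iff_summable_mul hp).1 hv) l).tsum_eq_zero_add]
  simp only [add_zero, add_assoc, add_comm 1]

lemma memDAR_const_add_mul (hp : ∀ k, 0 < p k) (hsp : Summable p) (hv : memDAR p v) (a b : ℝ) :
    memDAR p fun k => a + b * v k := by
  rw [memDAR_iff_summable_mul hp] at hv ⊢
  exact ((hsp.mul_left a).add (hv.mul_left b)).congr fun k => by ring

lemma opAR_const_add_mul (hp : ∀ k, 0 < p k) (hsp : Summable p) (hv : memDAR p v) (a b : ℝ)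
    (l : ℕ) : opAR p (fun k => a + b * v k) l = a + b * opAR p v l := by
  have hq := (qtail_pos hp hsp l).ne'
  have hpl := summable_comp_add_left hsp l
  have hpvl := summable_comp_add_left ((memDAR_iff_summable_mul hp).1 hv) l
  apply mul_left_cancel₀ hq
  rw [qtail_mul_opAR_eq_tsum hp hsp, mul_add, mul_left_comm (qtail p l) b,
    qtail_mul_opAR_eq_tsum hp hsp]
  simp only [mul_add, mul_left_comm _ b]
  rw [(hpl.mul_right a).tsum_add (hpvl.mul_left b), tsum_mul_right, tsum_mul_left, qtail]

end Operator

lemma Complex.norm_le_norm_sub_ofReal {z : ℂ} (hz : z.re ≤ 0) {a : ℝ} (ha : 0 ≤ a) :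
    ‖z‖ ≤ ‖z - a‖ := by
  rw [← sq_le_sq₀ (norm_nonneg _) (norm_nonneg _), Complex.sq_norm, Complex.sq_norm,
    Complex.normSq_apply, Complex.normSq_apply]
  simp only [Complex.sub_re, Complex.ofReal_re, Complex.sub_im, Complex.ofReal_im, sub_zero]
  nlinarith

/-- `(v, A v)` satisfies this recurrence for `v ∈ D(A)`; being linear, it lets us form complex
combinations of such pairs without complexifying `A`. -/
def tailRecurrence (p : ℕ → ℝ) : Submodule ℂ ((ℕ → ℂ) × (ℕ → ℂ)) where
  carrier := {x | ∀ l, (qtail p l : ℂ) * x.2 l = p l * x.1 l + qtail p (l + 1) * x.2 (l + 1)}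
  add_mem' {x y} hx hy l := by
    simp only [Prod.fst_add, Prod.snd_add, Pi.add_apply]
    linear_combination hx l + hy l
  zero_mem' l := by simp
  smul_mem' c x hx l := by
    simp only [Prod.smul_fst, Prod.smul_snd, Pi.smul_apply, smul_eq_mul]
    linear_combination c * hx l

section TailRecurrence

variable {p : ℕ → ℝ}

lemma mem_tailRecurrence {x : (ℕ → ℂ) × (ℕ → ℂ)} :
    x ∈ tailRecurrence p ↔
      ∀ l, (qtail p l : ℂ) * x.2 l = p l * x.1 l + qtail p (l + 1) * x.2 (l + 1) :=
  Iff.rfl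

/-- For `Re μ ≤ 0` the factor `|q_l μ - p_l| / (q_l |μ|)` in `q_{l+1} μ z_{l+1} = (q_l μ - p_l) z_l`
is at least `1`. -/
lemma monotone_qtail_mul_norm (hp : ∀ k, 0 < p k) (hsp : Summable p) {μ : ℂ} (hμ : μ ≠ 0)
    (hre : μ.re ≤ 0) {z : ℕ → ℂ} (hz : (z, μ • z) ∈ tailRecurrence p) :
    Monotone fun l => qtail p l * ‖z l‖ := by
  refine monotone_nat_of_le_succ fun l => ?_
  have hq := (qtail_pos hp hsp l).le
  have hstep : (qtail p (l + 1) : ℂ) * μ * z (l + 1) = (qtail p l * μ - p l) * z l := by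
    have := hz l
    simp only [Pi.smul_apply, smul_eq_mul] at this
    linear_combination -this
  have hnorm := congrArg norm hstep
  rw [norm_mul, norm_mul, norm_mul, Complex.norm_real, Real.norm_of_nonneg (qtail_pos hp hsp _).le]
    at hnorm
  have hle : qtail p l * ‖μ‖ ≤ ‖(qtail p l : ℂ) * μ - p l‖ := by
    have h := Complex.norm_le_norm_sub_ofReal (z := qtail p l * μ)
      (by rw [Complex.re_ofReal_mul]; exact mul_nonpos_of_nonneg_of_nonpos hq hre) (hp l).le
    rwa [norm_mul, Complex.norm_real, Real.norm_of_nonneg hq] at h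
  have hμpos : 0 < ‖μ‖ := norm_pos_iff.2 hμ
  nlinarith [mul_le_mul_of_nonneg_right hle (norm_nonneg (z l))]

lemma eq_zero_of_mem_tailRecurrence_smul (hp : ∀ k, 0 < p k) (hsp : Summable p) {μ : ℂ}
    (hμ : μ ≠ 0) (hre : μ.re ≤ 0) {z : ℕ → ℂ} (hsz : Summable fun k => (p k : ℂ) * z k)
    (hz : (z, μ • z) ∈ tailRecurrence p) : z = 0 := by
  funext l₀
  by_contra hne
  set c := qtail p l₀ * ‖z l₀‖
  have hc : 0 < c := mul_pos (qtail_pos hp hsp l₀) (norm_pos_iff.2 hne)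
  set f := fun k => p k * ‖z k‖
  have hf : Summable f := (summable_norm_iff.2 hsz).congr fun k => by
    rw [norm_mul, Complex.norm_real, Real.norm_of_nonneg (hp k).le]
  have hmono := monotone_qtail_mul_norm hp hsp hμ hre hz
  have htail : ∀ i, l₀ ≤ i → c ≤ ∑' k, f (k + i) := fun i hi => by
    have hqi := qtail_pos hp hsp i
    have hpi : Summable fun k => p (k + i) := (summable_nat_add_iff i).2 hsp
    have hqtail : ∑' k, p (k + i) = qtail p i := tsum_congr fun k => by rw [add_comm]
    calc c = (∑' k, p (k + i)) * (c / qtail p i) := by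
          rw [hqtail]
          field_simp
      _ = ∑' k, p (k + i) * (c / qtail p i) := tsum_mul_right.symm
      _ ≤ ∑' k, f (k + i) := by
          refine (hpi.mul_right _).tsum_le_tsum (fun k => ?_) ((summable_nat_add_iff i).2 hf)
          refine mul_le_mul_of_nonneg_left ?_ (hp _).le
          rw [div_le_iff₀ hqi]
          calc c ≤ qtail p (k + i) * ‖z (k + i)‖ := hmono (hi.trans (Nat.le_add_left i k))
            _ ≤ ‖z (k + i)‖ * qtail p i := by
              rw [mul_comm]
              exact mul_le_mul_of_nonneg_left
                (qtail_antitone hp hsp (Nat.le_add_left i k)) (norm_nonneg _)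
  obtain ⟨i, hsmall, hi⟩ :=
    (((tendsto_sum_nat_add f).eventually (gt_mem_nhds hc)).and (eventually_ge_atTop l₀)).exists
  exact (htail i hi).not_gt hsmall

end TailRecurrence

open Real in
lemma Complex.re_nonpos_of_pow_eq_one {s : ℕ} (hs0 : s ≠ 0) (hs4 : s ≤ 4) {ω : ℂ}
    (hω : ω ^ s = 1) (hω1 : ω ≠ 1) : ω.re ≤ 0 := by
  have : NeZero s := ⟨hs0⟩
  obtain ⟨i, his, rfl⟩ := (Complex.isPrimitiveRoot_exp s hs0).eq_pow_of_pow_eq_one hω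
  have hi0 : i ≠ 0 := by
    rintro rfl
    exact hω1 (pow_zero _)
  rw [← Complex.exp_nat_mul, show (i : ℂ) * (2 * π * Complex.I / s) =
      ((2 * π * i / s : ℝ) : ℂ) * Complex.I by push_cast; ring, Complex.exp_ofReal_mul_I_re]
  have hs : (0 : ℝ) < s := by positivity
  have hlow : (s : ℝ) ≤ 4 * i := by exact_mod_cast (by omega : s ≤ 4 * i)
  have hhigh : (4 * i : ℝ) ≤ 3 * s := by exact_mod_cast (by omega : 4 * i ≤ 3 * s)
  apply Real.cos_nonpos_of_pi_div_two_le_of_le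
  · rw [le_div_iff₀ hs]
    nlinarith [Real.pi_pos]
  · rw [div_le_iff₀ hs]
    nlinarith [Real.pi_pos]

lemma IsPrimitiveRoot.geom_sum_pow_eq_zero {K : Type*} [CommRing K] [IsDomain K] {ζ : K}
    {s j : ℕ} (hζ : IsPrimitiveRoot ζ s) (hj0 : j ≠ 0) (hjs : j < s) :
    ∑ k ∈ range s, (ζ ^ j) ^ k = 0 := by
  have h := geom_sum_mul (ζ ^ j) s
  rw [← pow_mul, pow_mul', hζ.pow_eq_one, one_pow, sub_self] at h
  exact (mul_eq_zero.1 h).resolve_right (sub_ne_zero.2 (hζ.pow_ne_one_of_pos_of_lt hj0 hjs))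

lemma IsPrimitiveRoot.sum_sum_inv_pow_smul_eq {K M : Type*} [Field K] [AddCommGroup M]
    [Module K M] {ζ : K} {s : ℕ} (hζ : IsPrimitiveRoot ζ s) (c : K) (f : ℕ → M) :
    ∑ k ∈ range s, ∑ j ∈ range s, (c * (ζ ^ k)⁻¹)⁻¹ ^ j • f j = s • f 0 := by
  rcases Nat.eq_zero_or_pos s with rfl | hs
  · simp
  rw [sum_comm, sum_eq_single 0]
  · simp only [pow_zero, one_smul, sum_const, card_range]
  · intro j hj hj0
    rw [← sum_smul]
    simp only [mul_inv, inv_inv, mul_pow, ← mul_sum, pow_right_comm _ _ j,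
      hζ.geom_sum_pow_eq_zero hj0 (mem_range.1 hj), mul_zero, zero_smul]
  · simp [hs]

lemma pow_mul_sum_inv_pow_mul_sub {K : Type*} [Field K] (u : ℕ → K) {γ : K} (hγ : γ ≠ 0)
    (c : K) (n : ℕ) :
    γ ^ n * ∑ j ∈ range n, γ⁻¹ ^ j * (u (j + 1) - γ * u j - c) =
      γ * (u n - γ ^ n * u 0 - c * ∑ j ∈ range n, γ ^ j) := by
  induction n with
  | zero => simp
  | succ n ih =>
    rw [sum_range_succ, geom_sum_succ, mul_add, pow_succ', mul_assoc, ih, inv_pow]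
    field_simp
    ring

section ShiftChain

variable {p : ℕ → ℝ} {s : ℕ} {h : ℕ → ℕ → ℂ}

lemma summable_mul_sum_smul {ι : Type*} (t : Finset ι) (c : ι → ℂ) {g : ι → ℕ → ℂ}
    (hg : ∀ i ∈ t, Summable fun k => (p k : ℂ) * g i k) :
    Summable fun k => (p k : ℂ) * (∑ i ∈ t, c i • g i) k := by
  simp only [Finset.sum_apply, Pi.smul_apply, smul_eq_mul, Finset.mul_sum, mul_left_comm (p _ : ℂ)]
  exact summable_sum fun i hi => (hg i hi).mul_left (c i)

lemma sum_inv_pow_smul_mem_tailRecurrence (hrec : ∀ j < s, (h j, h (j + 1)) ∈ tailRecurrence p)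
    {μ : ℂ} (hμ : μ ≠ 0) (hper : h s = μ ^ s • h 0) :
    (∑ j ∈ range s, μ⁻¹ ^ j • h j, μ • ∑ j ∈ range s, μ⁻¹ ^ j • h j) ∈ tailRecurrence p := by
  have hmem : ∑ j ∈ range s, μ⁻¹ ^ j • (h j, h (j + 1)) ∈ tailRecurrence p :=
    Submodule.sum_mem _ fun j hj => Submodule.smul_mem _ _ (hrec j (mem_range.1 hj))
  convert hmem using 1
  simp only [Prod.ext_iff, Prod.fst_sum, Prod.snd_sum, Prod.smul_fst, Prod.smul_snd, true_and]
  cases s with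
  | zero => simp
  | succ t =>
    rw [sum_range_succ', sum_range_succ, hper, smul_add, smul_sum, pow_zero, one_smul, smul_smul,
      inv_pow, pow_succ, inv_mul_cancel_left₀ (pow_ne_zero _ hμ)]
    congr 1
    refine sum_congr rfl fun j _ => ?_
    rw [smul_smul, pow_succ', mul_inv_cancel_left₀ hμ]

theorem head_eq_zero_of_periodic_tailRecurrence (hp : ∀ k, 0 < p k) (hsp : Summable p) (hs0 : s ≠ 0)
    (hs4 : s ≤ 4) {γ : ℝ} (hγ : 0 < γ) (hsum : ∀ j < s, Summable fun k => (p k : ℂ) * h j k)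
    (hrec : ∀ j < s, (h j, h (j + 1)) ∈ tailRecurrence p) (hper : h s = (γ : ℂ) ^ s • h 0)
    (hγsum : ∑ j ∈ range s, (γ : ℂ)⁻¹ ^ j • h j = 0) : h 0 = 0 := by
  have hζ := Complex.isPrimitiveRoot_exp s hs0
  set ζ := Complex.exp (2 * Real.pi * Complex.I / s)
  set z : ℕ → ℕ → ℂ := fun k => ∑ j ∈ range s, ((γ : ℂ) * (ζ ^ k)⁻¹)⁻¹ ^ j • h j
  have hz : ∀ k < s, z k = 0 := by
    intro k hk
    rcases eq_or_ne k 0 with rfl | hk0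
    · simpa [z] using hγsum
    have hω : (ζ ^ k)⁻¹ ^ s = 1 := by
      rw [inv_pow, ← pow_mul, pow_mul', hζ.pow_eq_one, one_pow, inv_one]
    have hω1 : (ζ ^ k)⁻¹ ≠ 1 := inv_ne_one.2 (hζ.pow_ne_one_of_pos_of_lt hk0 hk)
    have hμ : (γ : ℂ) * (ζ ^ k)⁻¹ ≠ 0 :=
      mul_ne_zero (by exact_mod_cast hγ.ne') (inv_ne_zero (pow_ne_zero _ (hζ.ne_zero hs0)))
    have hre : ((γ : ℂ) * (ζ ^ k)⁻¹).re ≤ 0 := by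
      rw [Complex.re_ofReal_mul]
      exact mul_nonpos_of_nonneg_of_nonpos hγ.le (Complex.re_nonpos_of_pow_eq_one hs0 hs4 hω hω1)
    refine eq_zero_of_mem_tailRecurrence_smul hp hsp hμ hre
      (summable_mul_sum_smul _ _ fun j hj => hsum j (mem_range.1 hj))
      (sum_inv_pow_smul_mem_tailRecurrence hrec hμ ?_)
    rw [hper, mul_pow, hω, mul_one]
  have hs : s • h 0 = 0 := by
    rw [← hζ.sum_sum_inv_pow_smul_eq γ h]
    exact sum_eq_zero fun k hk => hz k (mem_range.1 hk)
  exact (smul_eq_zero.1 hs).resolve_left hs0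

end ShiftChain

theorem head_eq_zero_of_periodic_recurrence {p : ℕ → ℝ} (hp : ∀ k, 0 < p k) (hsp : Summable p)
    {s : ℕ} (hs0 : s ≠ 0) (hs4 : s ≤ 4) {γ : ℝ} (hγ : 0 < γ) {h : ℕ → ℕ → ℝ}
    (hmem : ∀ j < s, memDAR p (h j))
    (hrec : ∀ j < s, ∀ l,
      qtail p l * h (j + 1) l = p l * h j l + qtail p (l + 1) * h (j + 1) (l + 1))
    (hper : ∀ l, h s l = γ ^ s * h 0 l) (hγsum : ∀ l, ∑ j ∈ range s, γ⁻¹ ^ j * h j l = 0) :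
    h 0 = 0 := by
  have hsum : ∀ j < s, Summable fun k => (p k : ℂ) * h j k := fun j hj => by
    exact_mod_cast Complex.summable_ofReal.2 ((memDAR_iff_summable_mul hp).1 (hmem j hj))
  have hC := head_eq_zero_of_periodic_tailRecurrence (h := fun j l => (h j l : ℂ)) hp hsp hs0 hs4
    hγ hsum (fun j hj => mem_tailRecurrence.2 fun l => by dsimp only; exact_mod_cast hrec j hj l)
    (funext fun l => by simp [hper l])
    (funext fun l => by simpa [Finset.sum_apply] using congrArg Complex.ofReal (hγsum l))
  funext l
  simpa using congrFun hC l

def iterateDefect (p v : ℕ → ℝ) (a c : ℝ) (j : ℕ) : ℕ → ℝ :=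
  fun l => (opAR p)^[j + 1] v l - a * (opAR p)^[j] v l - c

section IterateDefect

variable {p v : ℕ → ℝ} {j : ℕ}

lemma memDAR_iterateDefect (hp : ∀ k, 0 < p k) (hsp : Summable p)
    (h₀ : memDAR p ((opAR p)^[j] v)) (h₁ : memDAR p ((opAR p)^[j + 1] v)) (a c : ℝ) :
    memDAR p (iterateDefect p v a c j) := by
  rw [memDAR_iff_summable_mul hp] at h₀ h₁ ⊢
  exact ((h₁.sub (h₀.mul_left a)).sub (hsp.mul_left c)).congr fun k => by
    simp only [iterateDefect]
    ring

lemma qtail_mul_iterateDefect_succ (hp : ∀ k, 0 < p k) (hsp : Summable p)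
    (h₀ : memDAR p ((opAR p)^[j] v)) (h₁ : memDAR p ((opAR p)^[j + 1] v)) (a c : ℝ) (l : ℕ) :
    qtail p l * iterateDefect p v a c (j + 1) l =
      p l * iterateDefect p v a c j l +
        qtail p (l + 1) * iterateDefect p v a c (j + 1) (l + 1) := by
  have e₁ := qtail_mul_opAR_eq hp hsp h₁ l
  have e₀ := qtail_mul_opAR_eq hp hsp h₀ l
  simp only [iterateDefect, Function.iterate_succ_apply'] at e₁ e₀ ⊢
  linear_combination e₁ - a * e₀ - c * qtail_eq_add_qtail_succ hsp l

lemma iterateDefect_periodic (hp : ∀ k, 0 < p k) (hsp : Summable p) (hv : memDAR p v)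
    {γ β₀ : ℝ} {s : ℕ} (hσ : ∑ k ∈ range s, γ ^ k ≠ 0)
    (hlin : (opAR p)^[s] v = fun k => β₀ + γ ^ s * v k) (l : ℕ) :
    iterateDefect p v γ (β₀ / ∑ k ∈ range s, γ ^ k) s l =
      γ ^ s * iterateDefect p v γ (β₀ / ∑ k ∈ range s, γ ^ k) 0 l := by
  simp only [iterateDefect, Function.iterate_succ_apply', hlin, Function.iterate_zero_apply,
    opAR_const_add_mul hp hsp hv]
  linear_combination
    (γ - 1) * div_mul_cancel₀ β₀ hσ - β₀ / (∑ k ∈ range s, γ ^ k) * geom_sum_mul γ s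

lemma sum_inv_pow_mul_iterateDefect {γ β₀ : ℝ} (hγ : γ ≠ 0) {s : ℕ} (hσ : ∑ k ∈ range s, γ ^ k ≠ 0)
    (hlin : (opAR p)^[s] v = fun k => β₀ + γ ^ s * v k) (l : ℕ) :
    ∑ j ∈ range s, γ⁻¹ ^ j * iterateDefect p v γ (β₀ / ∑ k ∈ range s, γ ^ k) j l = 0 := by
  have h := pow_mul_sum_inv_pow_mul_sub (fun j => (opAR p)^[j] v l) hγ
    (β₀ / ∑ k ∈ range s, γ ^ k) s
  simp only [hlin, Function.iterate_zero_apply, div_mul_cancel₀ _ hσ] at h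
  exact (mul_eq_zero.1 (h.trans (by ring))).resolve_left (pow_ne_zero _ hγ)

end IterateDefect

theorem adjacent_linearity_of_nonadjacent_general
    (p : ℕ → ℝ) (hp : ∀ k, 0 < p k) (hsum : HasSum p 1)
    (s : ℕ) (hs : s = 1 ∨ s = 2 ∨ s = 3 ∨ s = 4) (β₀ β₁ : ℝ)
    (hβ₁ : 1 ≤ β₁)
    (hid : memDAiterR p s (fun k => (k : ℝ)))
    (hlin : ∀ l : ℕ, ((opAR p)^[s] (fun k => (k : ℝ))) l = β₀ + β₁ * l) :
    ∀ l : ℕ, opAR p (fun k => (k : ℝ)) l =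
      β₀ / (∑ k ∈ Finset.range s, (β₁ ^ ((1 : ℝ) / s)) ^ k) +
        β₁ ^ ((1 : ℝ) / s) * l := by
  have hsp := hsum.summable
  have hs0 : s ≠ 0 := by omega
  set γ := β₁ ^ ((1 : ℝ) / s) with hγdef
  have hγ : 0 < γ := Real.rpow_pos_of_pos (by linarith) _
  have hγs : γ ^ s = β₁ := by
    rw [hγdef, one_div]
    exact Real.rpow_inv_natCast_pow (by linarith) hs0
  have hσ : ∑ k ∈ range s, γ ^ k ≠ 0 :=
    (sum_pos (fun _ _ => by positivity) (nonempty_range_iff.2 hs0)).ne'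
  have hus : (opAR p)^[s] (fun k => (k : ℝ)) = fun k : ℕ => β₀ + γ ^ s * (k : ℝ) :=
    funext fun l => by rw [hlin, hγs]
  have hid₀ : memDAR p fun k => (k : ℝ) := hid 0 (Nat.pos_of_ne_zero hs0)
  have hmem : ∀ j ≤ s, memDAR p ((opAR p)^[j] fun k => (k : ℝ)) := fun j hj => by
    rcases hj.lt_or_eq with hj | rfl
    · exact hid j hj
    · exact hus ▸ memDAR_const_add_mul hp hsp hid₀ β₀ _
  have hd := head_eq_zero_of_periodic_recurrence hp hsp hs0 (by omega) hγ
    (fun j hj => memDAR_iterateDefect hp hsp (hmem j hj.le) (hmem (j + 1) hj) _ _)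
    (fun j hj => qtail_mul_iterateDefect_succ hp hsp (hmem j hj.le) (hmem (j + 1) hj) _ _)
    (iterateDefect_periodic hp hsp hid₀ hσ hus) (sum_inv_pow_mul_iterateDefect hγ.ne' hσ hus)
  intro l
  have := congrFun hd l
  simp only [iterateDefect, zero_add, Function.iterate_one, Function.iterate_zero_apply,
    Pi.zero_apply] at this
  linarith

/-- For `s ∈ {1,2,3,4}`, linearity `(A^s id)(l) = β₀ + β₁ l` with `β₁ ≥ 1`, `β₀ > 0`
implies linearity of the adjacent regression: `(A id)(l) = γ₀ + γ₁ l` with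
`γ₁ = β₁^{1/s}` and `γ₀ = β₀ / Σ_{k=0}^{s−1} γ₁^k`. -/
theorem adjacent_linearity_of_nonadjacent
    (p : ℕ → ℝ) (hp : ∀ k, 0 < p k) (hsum : HasSum p 1)
    (s : ℕ) (hs : s = 1 ∨ s = 2 ∨ s = 3 ∨ s = 4) (β₀ β₁ : ℝ)
    (hβ₁ : 1 ≤ β₁) (hβ₀ : 0 < β₀)
    (hid : memDAiterR p s (fun k => (k : ℝ)))
    (hlin : ∀ l : ℕ, ((opAR p)^[s] (fun k => (k : ℝ))) l = β₀ + β₁ * l) :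
    ∀ l : ℕ, opAR p (fun k => (k : ℝ)) l =
      β₀ / (∑ k ∈ Finset.range s, (β₁ ^ ((1 : ℝ) / s)) ^ k) +
        β₁ ^ ((1 : ℝ) / s) * l :=
  adjacent_linearity_of_nonadjacent_general p hp hsum s hs β₀ β₁ hβ₁ hid hlin
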